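/- Let n ≥ 3 and let B_n be the braid group on n strands with Artin generators σ_1, …, σ_{n−1}. Let 2 ≤ i ≤ n − 1 and ε₁, ε₂ ∈ {1, −1}. Then σ_i^{ε₁} σ_i^{ε₂} = σ_{i−1}^{−1} σ_i^{−1} σ_{i−1}^{ε₁} σ_i σ_{i−1} σ_i^{ε₂} in B_n; in particular, for any a, b ∈ B_n there exist signs δ₁, …, δ₆ ∈ {1, −1} with a σ_i^{ε₁} σ_i^{ε₂} b = a σ_{i−1}^{δ₁} σ_i^{δ₂} σ_{i−1}^{δ₃} σ_i^{δ₄} σ_{i−1}^{δ₅} σ_i^{δ₆} b. Similarly, if 1 ≤ i ≤ n − 2, there exist signs δ₁, …, δ₆ ∈ {1, −1} with a σ_i^{ε₁} σ_i^{ε₂} b = a σ_i^{δ₁} σ_{i+1}^{δ₂} σ_i^{δ₃} σ_{i+1}^{δ₄} σ_i^{δ₅} σ_{i+1}^{δ₆} b. -/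
import Mathlib


/-- The braid relations on `n` generators `σ_1, …, σ_n` (indexed by `Fin n`, where the
generator of index `i : Fin n` stands for `σ_{i+1}`): the braid relations
`σ_i σ_{i+1} σ_i = σ_{i+1} σ_i σ_{i+1}` and the commutations `σ_i σ_j = σ_j σ_i` for
`|i − j| ≥ 2`. -/
def braidRels (n : ℕ) : Set (FreeGroup (Fin n)) :=
  {r | (∃ i j : Fin n, (i : ℕ) + 1 = (j : ℕ) ∧
          r = .of i * .of j * .of i * (.of j * .of i * .of j)⁻¹) ∨
       (∃ i j : Fin n, (i : ℕ) + 2 ≤ (j : ℕ) ∧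
          r = .of i * .of j * (.of j * .of i)⁻¹)}

/-- The braid group on `n` strands, presented by the Artin generators
`σ_1, …, σ_{n-1}` and the braid relations. -/
abbrev BraidGroup (n : ℕ) := PresentedGroup (braidRels (n - 1))

/-- The Artin generator `σ_i` of the braid group on `n` strands, for `1 ≤ i ≤ n − 1`
(and junk value `1` otherwise). -/
noncomputable def σ {n : ℕ} (i : ℕ) : BraidGroup n :=
  if h : 1 ≤ i ∧ i ≤ n - 1 then PresentedGroup.of ⟨i - 1, by omega⟩ else 1

lemma mk_rel_eq_one {α} {rels : Set (FreeGroup α)} {r} (h : r ∈ rels) :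
    PresentedGroup.mk rels r = 1 :=
  (QuotientGroup.eq_one_iff r).2 (Subgroup.subset_normalClosure h)

lemma braid_rel {n : ℕ} (j : ℕ) (h1 : 1 ≤ j) (h2 : j + 1 ≤ n - 1) :
    σ (n := n) j * σ (j + 1) * σ j = σ (j + 1) * σ j * σ (j + 1) := by
  have hj : 1 ≤ j ∧ j ≤ n - 1 := ⟨h1, by omega⟩
  have hj' : 1 ≤ j + 1 ∧ j + 1 ≤ n - 1 := ⟨by omega, h2⟩
  rw [σ, σ, dif_pos hj, dif_pos hj']
  set a : Fin (n-1) := ⟨j - 1, by omega⟩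
  set b : Fin (n-1) := ⟨j + 1 - 1, by omega⟩
  have hmem : (FreeGroup.of a * FreeGroup.of b * FreeGroup.of a *
      (FreeGroup.of b * FreeGroup.of a * FreeGroup.of b)⁻¹) ∈ braidRels (n-1) := by
    left; exact ⟨a, b, by simp [a, b]; omega, rfl⟩
  have := mk_rel_eq_one hmem
  simp only [map_mul, map_inv] at this
  have h := mul_eq_one_iff_eq_inv.1 this
  rw [inv_inv] at h
  exact h

lemma key1 {G : Type*} [Group G] (a b : G) (hb : a * b * a = b * a * b)
    (ε : ℤ) (hε : ε = 1 ∨ ε = -1) : a⁻¹ * b⁻¹ * a ^ ε * b * a = b ^ ε := by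
  rcases hε with rfl | rfl
  · calc a⁻¹ * b⁻¹ * a ^ (1:ℤ) * b * a = a⁻¹ * b⁻¹ * (a * b * a) := by group
    _ = a⁻¹ * b⁻¹ * (b * a * b) := by rw [hb]
    _ = b ^ (1:ℤ) := by group
  · have hb' : a⁻¹ * b⁻¹ * a⁻¹ = b⁻¹ * a⁻¹ * b⁻¹ := by
      have := congrArg (·⁻¹) hb
      simpa [mul_inv_rev, mul_assoc] using this
    calc a⁻¹ * b⁻¹ * a ^ (-1:ℤ) * b * a = a⁻¹ * b⁻¹ * a⁻¹ * (b * a) := by group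
    _ = b⁻¹ * a⁻¹ * b⁻¹ * (b * a) := by rw [hb']
    _ = b ^ (-1:ℤ) := by group

/-- In the braid group `B_n` (`n ≥ 3`), for `2 ≤ i ≤ n − 1` and signs `ε₁, ε₂`, one has
`σ_i^{ε₁} σ_i^{ε₂} = σ_{i−1}^{−1} σ_i^{−1} σ_{i−1}^{ε₁} σ_i σ_{i−1} σ_i^{ε₂}`; in
particular any `a σ_i^{ε₁} σ_i^{ε₂} b` can be rewritten as
`a σ_{i−1}^{δ₁} σ_i^{δ₂} σ_{i−1}^{δ₃} σ_i^{δ₄} σ_{i−1}^{δ₅} σ_i^{δ₆} b` for suitable signs,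
and similarly with `σ_{i+1}` in place of `σ_{i−1}` whenever `1 ≤ i ≤ n − 2`. -/
theorem braid_double_crossing_replacement
    (n : ℕ) (hn : 3 ≤ n) (i : ℕ) (hi1 : 2 ≤ i) (hi2 : i ≤ n - 1)
    (ε₁ ε₂ : ℤ) (hε₁ : ε₁ = 1 ∨ ε₁ = -1) (hε₂ : ε₂ = 1 ∨ ε₂ = -1) :
    (σ (n := n) i ^ ε₁ * σ i ^ ε₂ =
        (σ (i - 1))⁻¹ * (σ i)⁻¹ * σ (i - 1) ^ ε₁ * σ i * σ (i - 1) * σ i ^ ε₂) ∧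
    (∀ a b : BraidGroup n, ∃ δ : Fin 6 → ℤ, (∀ t, δ t = 1 ∨ δ t = -1) ∧
        a * σ i ^ ε₁ * σ i ^ ε₂ * b =
          a * σ (i - 1) ^ δ 0 * σ i ^ δ 1 * σ (i - 1) ^ δ 2 * σ i ^ δ 3 *
            σ (i - 1) ^ δ 4 * σ i ^ δ 5 * b) ∧
    (∀ i' : ℕ, 1 ≤ i' → i' ≤ n - 2 →
      ∀ a b : BraidGroup n, ∃ δ : Fin 6 → ℤ, (∀ t, δ t = 1 ∨ δ t = -1) ∧
        a * σ i' ^ ε₁ * σ i' ^ ε₂ * b =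
          a * σ i' ^ δ 0 * σ (i' + 1) ^ δ 1 * σ i' ^ δ 2 * σ (i' + 1) ^ δ 3 *
            σ i' ^ δ 4 * σ (i' + 1) ^ δ 5 * b) := by
  have hbr : σ (n := n) (i - 1) * σ i * σ (i - 1) = σ i * σ (i - 1) * σ i := by
    have := braid_rel (n := n) (i - 1) (by omega) (by omega)
    rwa [show i - 1 + 1 = i by omega] at this
  have hk : (σ (n := n) (i-1))⁻¹ * (σ i)⁻¹ * σ (i-1) ^ ε₁ * σ i * σ (i-1) = σ i ^ ε₁ :=
    key1 _ _ hbr ε₁ hε₁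
  have h1 : σ (n := n) i ^ ε₁ * σ i ^ ε₂ =
      (σ (i - 1))⁻¹ * (σ i)⁻¹ * σ (i - 1) ^ ε₁ * σ i * σ (i - 1) * σ i ^ ε₂ := by
    rw [hk]
  refine ⟨h1, ?_, ?_⟩
  · intro a b
    refine ⟨![-1, -1, ε₁, 1, 1, ε₂], ?_, ?_⟩
    · intro t; fin_cases t <;> simp <;> tauto
    have e0 : (![-1, -1, ε₁, 1, 1, ε₂] : Fin 6 → ℤ) 0 = -1 := rfl
    have e1 : (![-1, -1, ε₁, 1, 1, ε₂] : Fin 6 → ℤ) 1 = -1 := rfl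
    have e2 : (![-1, -1, ε₁, 1, 1, ε₂] : Fin 6 → ℤ) 2 = ε₁ := rfl
    have e3 : (![-1, -1, ε₁, 1, 1, ε₂] : Fin 6 → ℤ) 3 = 1 := rfl
    have e4 : (![-1, -1, ε₁, 1, 1, ε₂] : Fin 6 → ℤ) 4 = 1 := rfl
    have e5 : (![-1, -1, ε₁, 1, 1, ε₂] : Fin 6 → ℤ) 5 = ε₂ := rfl
    rw [e0, e1, e2, e3, e4, e5, zpow_neg_one, zpow_neg_one, zpow_one, zpow_one,
      mul_assoc a, mul_assoc a, h1]
    group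
  · intro i' h1' h2' a b
    have hbr' : σ (n := n) i' * σ (i'+1) * σ i' = σ (i'+1) * σ i' * σ (i'+1) :=
      braid_rel i' h1' (by omega)
    have hk' : (σ (n := n) (i'+1))⁻¹ * (σ i')⁻¹ * σ (i'+1) ^ ε₂ * σ i' * σ (i'+1)
        = σ i' ^ ε₂ := key1 _ _ hbr'.symm ε₂ hε₂
    refine ⟨![ε₁, -1, -1, ε₂, 1, 1], ?_, ?_⟩
    · intro t; fin_cases t <;> simp <;> tauto
    have e0 : (![ε₁, -1, -1, ε₂, 1, 1] : Fin 6 → ℤ) 0 = ε₁ := rfl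
    have e1 : (![ε₁, -1, -1, ε₂, 1, 1] : Fin 6 → ℤ) 1 = -1 := rfl
    have e2 : (![ε₁, -1, -1, ε₂, 1, 1] : Fin 6 → ℤ) 2 = -1 := rfl
    have e3 : (![ε₁, -1, -1, ε₂, 1, 1] : Fin 6 → ℤ) 3 = ε₂ := rfl
    have e4 : (![ε₁, -1, -1, ε₂, 1, 1] : Fin 6 → ℤ) 4 = 1 := rfl
    have e5 : (![ε₁, -1, -1, ε₂, 1, 1] : Fin 6 → ℤ) 5 = 1 := rfl
    rw [e0, e1, e2, e3, e4, e5, zpow_neg_one, zpow_neg_one, zpow_one, zpow_one, ← hk']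
    group
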